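/- arXiv:2010.07426 — 3 statements merged into one kernel-verified Lean document; each statement's English description precedes it below -/
import Mathlib

section
/- Fix an identity feature-codeword setting: φ: A → R^d with codewords of norm L, ψ: F → {-1,+1}^d, ⊗ the coordinate-wise product, ψ⁻¹(f) = ψ(f) (self-inverse). Assume the decoding incoherence condition: |⟨φ(a), (φ(a')⊗ψ(f))⊗ψ(f')⟩| ≤ μL² for all a, a' and all distinct f ≠ f', and |⟨φ(a),φ(a')⟩| ≤ μL² for distinct a,a'. If μ < 1/(2n), then for the encoding φ(x) = Σ_{j=1}^n φ(x_j)⊗ψ(f_j) of a structure with n features, the decoding rule argmax_{a∈A} ⟨φ(a), φ(x)⊗ψ(f_i)⟩ returns x_i for every feature index i. -/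
/-- Decoding structures (Section 4.1): with self-inverse ±1 feature codes and a
`μ`-incoherent binding with `μ < 1/(2n)`, unbinding a feature from the encoded
structure and taking the most similar codeword recovers its value: the stored
value `x i` has strictly larger similarity than any other symbol. -/
theorem stmt_8 {d n : ℕ} {A : Type*} [Fintype A] [DecidableEq A]
    (φ : A → Fin d → ℝ) (ψ : Fin n → Fin d → ℝ) (L μ : ℝ) (hL0 : 0 < L)
    (hψ : ∀ (f : Fin n) (j : Fin d), ψ f j = 1 ∨ ψ f j = -1)
    (hL : ∀ a : A, ∑ j : Fin d, φ a j ^ 2 = L ^ 2)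
    (hdecinc : ∀ (a a' : A) (f f' : Fin n), f ≠ f' →
      |∑ j : Fin d, φ a j * ((φ a' j * ψ f j) * ψ f' j)| ≤ μ * L ^ 2)
    (hinc : ∀ a a' : A, a ≠ a' → |∑ j : Fin d, φ a j * φ a' j| ≤ μ * L ^ 2)
    (hμ : μ < 1 / (2 * n))
    (x : Fin n → A) :
    ∀ i : Fin n, ∀ a : A, a ≠ x i →
      ∑ j : Fin d, φ a j * ((∑ k : Fin n, φ (x k) j * ψ k j) * ψ i j)
        < ∑ j : Fin d, φ (x i) j * ((∑ k : Fin n, φ (x k) j * ψ k j) * ψ i j) := by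
  intro i a ha
  have hn : 0 < n := i.pos
  have hL2 : (0:ℝ) < L ^ 2 := by positivity
  have hμ0 : 0 ≤ μ := by
    have h1 := hinc a (x i) ha
    have h2 : (0:ℝ) ≤ |∑ j : Fin d, φ a j * φ (x i) j| := abs_nonneg _
    nlinarith [h1, h2, hL2]
  have key : ∀ b : A, ∑ j : Fin d, φ b j * ((∑ k : Fin n, φ (x k) j * ψ k j) * ψ i j)
      = ∑ k : Fin n, ∑ j : Fin d, φ b j * ((φ (x k) j * ψ k j) * ψ i j) := by
    intro b
    simp_rw [Finset.sum_mul, Finset.mul_sum]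
    rw [Finset.sum_comm]
  have hsplit : ∀ b : A, ∑ k : Fin n, ∑ j : Fin d, φ b j * ((φ (x k) j * ψ k j) * ψ i j)
      = (∑ j : Fin d, φ b j * ((φ (x i) j * ψ i j) * ψ i j))
        + ∑ k ∈ Finset.univ.erase i, ∑ j : Fin d, φ b j * ((φ (x k) j * ψ k j) * ψ i j) := by
    intro b
    exact (Finset.add_sum_erase _ _ (Finset.mem_univ i)).symm
  have hdiag : ∀ b : A, ∑ j : Fin d, φ b j * ((φ (x i) j * ψ i j) * ψ i j)
      = ∑ j : Fin d, φ b j * φ (x i) j := by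
    intro b
    refine Finset.sum_congr rfl fun j _ => ?_
    rcases hψ i j with h | h <;> rw [h] <;> ring
  have hrest : ∀ b : A,
      |∑ k ∈ Finset.univ.erase i, ∑ j : Fin d, φ b j * ((φ (x k) j * ψ k j) * ψ i j)|
        ≤ ((n:ℝ) - 1) * (μ * L ^ 2) := by
    intro b
    calc |∑ k ∈ Finset.univ.erase i, ∑ j : Fin d, φ b j * ((φ (x k) j * ψ k j) * ψ i j)|
        ≤ ∑ k ∈ Finset.univ.erase i,
            |∑ j : Fin d, φ b j * ((φ (x k) j * ψ k j) * ψ i j)| :=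
          Finset.abs_sum_le_sum_abs _ _
      _ ≤ ∑ k ∈ Finset.univ.erase i, μ * L ^ 2 :=
          Finset.sum_le_sum fun k hk => hdecinc b (x k) k i (Finset.ne_of_mem_erase hk)
      _ = ((n:ℝ) - 1) * (μ * L ^ 2) := by
          rw [Finset.sum_const, Finset.card_erase_of_mem (Finset.mem_univ i),
            Finset.card_univ, Fintype.card_fin, nsmul_eq_mul, Nat.cast_sub hn]
          norm_num
  have ha' := hinc a (x i) ha
  have hA := hrest a
  have hB := hrest (x i)
  have hdg : ∑ j : Fin d, φ (x i) j * φ (x i) j = L ^ 2 := by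
    rw [← hL (x i)]; exact Finset.sum_congr rfl fun j _ => (sq (φ (x i) j)).symm
  have h2n : μ * (2 * n) < 1 := by
    rw [lt_div_iff₀ (by positivity)] at hμ
    linarith
  rw [key, key, hsplit, hsplit, hdiag, hdiag, hdg]
  have habs1 := abs_le.mp ha'
  have habsA := abs_le.mp hA
  have habsB := abs_le.mp hB
  nlinarith [hL2, habs1.1, habs1.2, habsA.1, habsA.2, habsB.1, habsB.2]
end

section
/- Let X and X' be disjoint closed convex sets in R^n and let (p, q) ∈ X × X' be the closest pair of points between them (so ||p - q|| > 0). Suppose φ: R^n → R^d satisfies α(d)·||x-x'||² - β(d) ≤ ||φ(x)-φ(x')||² ≤ α(d)·||x-x'||² + β(d) for all x, x' ∈ X ∪ X', with α(d) > 0. If β(d)/α(d) < (1/2)||p-q||², then the affine function f(x) = ⟨φ(x), φ(p)-φ(q)⟩ - (1/2)(||φ(p)||² - ||φ(q)||²) is strictly positive for every x ∈ X and strictly negative for every x' ∈ X'. In particular, linear separability is preserved by distance-preserving embeddings. -/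
open RealInnerProductSpace

/-- If `p ∈ K` minimizes the distance to `q` over the convex set `K`, then the
inner product characterization of projections holds. -/
lemma aux_proj {n : ℕ} {K : Set (EuclideanSpace ℝ (Fin n))} (hK : Convex ℝ K)
    {p q : EuclideanSpace ℝ (Fin n)} (hp : p ∈ K)
    (hmin : ∀ x ∈ K, ‖q - p‖ ≤ ‖q - x‖) :
    ∀ x ∈ K, ⟪q - p, x - p⟫ ≤ 0 := by
  intro x hx
  by_contra hcon
  push_neg at hcon
  set c := ⟪q - p, x - p⟫ with hc
  have key : ∀ θ : ℝ, 0 < θ → θ ≤ 1 → 2 * c ≤ θ * ‖x - p‖ ^ 2 := by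
    intro θ h0 h1
    have hz : p + θ • (x - p) ∈ K :=
      hK.add_smul_sub_mem hp hx ⟨le_of_lt h0, h1⟩
    have hle := hmin _ hz
    have e : q - (p + θ • (x - p)) = (q - p) - θ • (x - p) := by
      rw [sub_add_eq_sub_sub]
    rw [e] at hle
    have hsq : ‖q - p‖ ^ 2 ≤ ‖(q - p) - θ • (x - p)‖ ^ 2 :=
      pow_le_pow_left₀ (norm_nonneg _) hle 2
    rw [norm_sub_sq_real (q - p) (θ • (x - p)), real_inner_smul_right, norm_smul, mul_pow] at hsq
    rw [Real.norm_eq_abs, abs_of_pos h0] at hsq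
    have hθ2 : 0 < θ ^ 2 := by positivity
    nlinarith
  have hs : 0 < ‖x - p‖ ^ 2 := by
    rcases lt_or_eq_of_le (sq_nonneg ‖x - p‖) with h | h
    · exact h
    · have := key 1 one_pos le_rfl
      rw [← h] at this
      linarith
  have hθpos : 0 < min 1 (c / ‖x - p‖ ^ 2) := by
    apply lt_min one_pos
    positivity
  have := key _ hθpos (min_le_left _ _)
  have h2 : min 1 (c / ‖x - p‖ ^ 2) * ‖x - p‖ ^ 2 ≤ c := by
    have := min_le_right 1 (c / ‖x - p‖ ^ 2)
    calc min 1 (c / ‖x - p‖ ^ 2) * ‖x - p‖ ^ 2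
        ≤ (c / ‖x - p‖ ^ 2) * ‖x - p‖ ^ 2 := by gcongr
      _ = c := div_mul_cancel₀ c (ne_of_gt hs)
  linarith

/-- Algebraic identity. -/
lemma aux_id {d : ℕ} (a b c : EuclideanSpace ℝ (Fin d)) :
    ⟪a, b - c⟫ - (1 / 2) * (‖b‖ ^ 2 - ‖c‖ ^ 2)
      = (1 / 2) * (‖a - c‖ ^ 2 - ‖a - b‖ ^ 2) := by
  rw [inner_sub_right, norm_sub_sq_real, norm_sub_sq_real]
  ring

/-- Preservation of linear separability (Theorem 22): if `φ` preserves squared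
Euclidean distance with distortion `β/α < ‖p-q‖²/2`, where `(p,q)` is the
closest pair between two disjoint closed convex sets, then the natural affine
function built from `φ(p), φ(q)` separates the embedded sets. -/
theorem stmt_15 {n d : ℕ} (X X' : Set (EuclideanSpace ℝ (Fin n)))
    (hXc : Convex ℝ X) (hX'c : Convex ℝ X')
    (hXcl : IsClosed X) (hX'cl : IsClosed X') (hdisj : Disjoint X X')
    (p q : EuclideanSpace ℝ (Fin n)) (hp : p ∈ X) (hq : q ∈ X')
    (hmin : ∀ x ∈ X, ∀ x' ∈ X', ‖p - q‖ ≤ ‖x - x'‖)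
    (φ : EuclideanSpace ℝ (Fin n) → EuclideanSpace ℝ (Fin d)) (α β : ℝ)
    (hα : 0 < α)
    (hpres : ∀ x ∈ X ∪ X', ∀ x' ∈ X ∪ X',
      α * ‖x - x'‖ ^ 2 - β ≤ ‖φ x - φ x'‖ ^ 2 ∧
        ‖φ x - φ x'‖ ^ 2 ≤ α * ‖x - x'‖ ^ 2 + β)
    (hgap : β / α < (1 / 2) * ‖p - q‖ ^ 2) :
    (∀ x ∈ X, 0 < ⟪φ x, φ p - φ q⟫ - (1 / 2) * (‖φ p‖ ^ 2 - ‖φ q‖ ^ 2)) ∧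
      (∀ x' ∈ X', ⟪φ x', φ p - φ q⟫ - (1 / 2) * (‖φ p‖ ^ 2 - ‖φ q‖ ^ 2) < 0) := by
  have hβ : β < α * ((1 / 2) * ‖p - q‖ ^ 2) := (div_lt_iff₀' hα).1 hgap
  -- projection inequalities
  have hprojX : ∀ x ∈ X, ⟪q - p, x - p⟫ ≤ 0 := by
    apply aux_proj hXc hp
    intro x hx
    rw [norm_sub_rev q p, norm_sub_rev q x]
    exact hmin x hx q hq
  have hprojX' : ∀ x ∈ X', ⟪p - q, x - q⟫ ≤ 0 := by
    apply aux_proj hX'c hq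
    intro x hx
    exact hmin p hp x hx
  constructor
  · intro x hx
    rw [aux_id]
    have h1 := (hpres x (Or.inl hx) q (Or.inr hq)).1
    have h2 := (hpres x (Or.inl hx) p (Or.inl hp)).2
    have hgeo : ‖p - q‖ ^ 2 ≤ ‖x - q‖ ^ 2 - ‖x - p‖ ^ 2 := by
      have hi := hprojX x hx
      have e : x - q = (x - p) - (q - p) := by abel
      have hn := norm_sub_sq_real (x - p) (q - p)
      rw [real_inner_comm] at hi
      rw [e, hn, norm_sub_rev p q]
      nlinarith [hi]
    nlinarith [sq_nonneg (‖p - q‖)]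
  · intro x hx
    rw [aux_id]
    have h1 := (hpres x (Or.inr hx) q (Or.inr hq)).2
    have h2 := (hpres x (Or.inr hx) p (Or.inl hp)).1
    have hgeo : ‖p - q‖ ^ 2 ≤ ‖x - p‖ ^ 2 - ‖x - q‖ ^ 2 := by
      have hi := hprojX' x hx
      have e : x - p = (x - q) - (p - q) := by abel
      have hn := norm_sub_sq_real (x - q) (p - q)
      rw [real_inner_comm] at hi
      rw [e, hn]
      nlinarith [hi]
    nlinarith [sq_nonneg (‖p - q‖)]
end

section
/- Let w = e₁ ∈ R^n and let u^(1),...,u^(k) be unit vectors each satisfying ⟨u^(j), w⟩ ≥ ρ > 0. Write u^(j) = (u₁^(j), u_R^(j)) and suppose Σ_{i≠j} ⟨u_R^(i), u_R^(j)⟩ ≤ 0. Then ⟨Σ_j u^(j), w⟩ / ||Σ_j u^(j)|| ≥ 1 - 1/(2kρ²). -/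
open RealInnerProductSpace Finset

/-- Key step of Theorem 23: `k` unit vectors each `ρ`-correlated with
`w = e₁`, whose residual components (orthogonal to `w`) have nonpositive total
pairwise correlation, sum to a vector whose normalized correlation with `w` is
at least `1 - 1/(2kρ²)`. -/
theorem stmt_18 {n k : ℕ} [NeZero n] (hk : 0 < k) (ρ : ℝ) (hρ : 0 < ρ)
    (u : Fin k → EuclideanSpace ℝ (Fin n))
    (hunit : ∀ j, ‖u j‖ = 1)
    (hcorr : ∀ j, ρ ≤ ⟪u j, EuclideanSpace.single (0 : Fin n) 1⟫)
    (hres : ∑ i : Fin k, ∑ j ∈ univ.erase i,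
        (⟪u i, u j⟫ - u i 0 * u j 0) ≤ 0) :
    1 - 1 / (2 * k * ρ ^ 2) ≤
      ⟪∑ j : Fin k, u j, EuclideanSpace.single (0 : Fin n) 1⟫ /
        ‖∑ j : Fin k, u j‖ := by
  have hinner : ∀ v : EuclideanSpace ℝ (Fin n),
      ⟪v, EuclideanSpace.single (0 : Fin n) 1⟫ = v 0 := by
    intro v
    rw [EuclideanSpace.inner_single_right]
    simp
  set S : EuclideanSpace ℝ (Fin n) := ∑ j : Fin k, u j with hS
  set N : ℝ := ∑ j : Fin k, u j 0 with hN
  have hSw : ⟪S, EuclideanSpace.single (0 : Fin n) 1⟫ = N := by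
    rw [hS, sum_inner]
    simp only [hinner, hN]
  have hcorr' : ∀ j, ρ ≤ u j 0 := by
    intro j; have := hcorr j; rwa [hinner] at this
  have hNge : (k : ℝ) * ρ ≤ N := by
    calc (k : ℝ) * ρ = ∑ _j : Fin k, ρ := by simp [mul_comm]
    _ ≤ N := Finset.sum_le_sum fun j _ => hcorr' j
  have hkpos : (0 : ℝ) < k := by exact_mod_cast hk
  have hNpos : 0 < N := lt_of_lt_of_le (by positivity) hNge
  -- norm bound
  have hnormsq : ‖S‖ ^ 2 ≤ N ^ 2 + k := by
    have h1 : ‖S‖ ^ 2 = ∑ i : Fin k, ∑ j : Fin k, ⟪u i, u j⟫ := by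
      rw [← real_inner_self_eq_norm_sq, hS, sum_inner]
      exact Finset.sum_congr rfl fun i _ => by rw [inner_sum]
    have h2 : ∀ i : Fin k, ∑ j : Fin k, ⟪u i, u j⟫
        = 1 + ∑ j ∈ univ.erase i, ⟪u i, u j⟫ := by
      intro i
      rw [← Finset.add_sum_erase _ _ (Finset.mem_univ i)]
      rw [real_inner_self_eq_norm_sq, hunit i]
      norm_num
    have h3 : ∑ i : Fin k, ∑ j ∈ univ.erase i, ⟪u i, u j⟫
        ≤ ∑ i : Fin k, ∑ j ∈ univ.erase i, u i 0 * u j 0 := by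
      have := hres
      have heq : ∑ i : Fin k, ∑ j ∈ univ.erase i, (⟪u i, u j⟫ - u i 0 * u j 0)
          = (∑ i : Fin k, ∑ j ∈ univ.erase i, ⟪u i, u j⟫)
            - ∑ i : Fin k, ∑ j ∈ univ.erase i, u i 0 * u j 0 := by
        rw [← Finset.sum_sub_distrib]
        exact Finset.sum_congr rfl fun i _ => by rw [← Finset.sum_sub_distrib]
      linarith [heq ▸ this]
    have h4 : ∑ i : Fin k, ∑ j ∈ univ.erase i, u i 0 * u j 0
        ≤ N ^ 2 := by
      have hfull : ∑ i : Fin k, ∑ j : Fin k, u i 0 * u j 0 = N ^ 2 := by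
        rw [hN, sq, Finset.sum_mul_sum]
      have hdiag : ∀ i : Fin k, ∑ j : Fin k, u i 0 * u j 0
          = u i 0 * u i 0 + ∑ j ∈ univ.erase i, u i 0 * u j 0 := fun i =>
        (Finset.add_sum_erase _ _ (Finset.mem_univ i)).symm
      have : ∑ i : Fin k, ∑ j ∈ univ.erase i, u i 0 * u j 0
          = N ^ 2 - ∑ i : Fin k, u i 0 * u i 0 := by
        rw [← hfull]
        rw [Finset.sum_congr rfl fun i _ => hdiag i, Finset.sum_add_distrib]
        ring
      rw [this]
      have : 0 ≤ ∑ i : Fin k, u i 0 * u i 0 :=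
        Finset.sum_nonneg fun i _ => mul_self_nonneg _
      linarith
    rw [h1, Finset.sum_congr rfl fun i _ => h2 i, Finset.sum_add_distrib]
    simp only [Finset.sum_const, Finset.card_univ, Fintype.card_fin, nsmul_eq_mul,
      mul_one]
    linarith
  have hSnorm_pos : 0 < ‖S‖ := by
    rcases eq_or_lt_of_le (norm_nonneg S) with h | h
    · exfalso
      have : S = 0 := by rwa [eq_comm, norm_eq_zero] at h
      rw [this] at hSw
      simp at hSw
      linarith
    · exact h
  rw [hSw]
  -- main inequality
  have h1 : 1 - 1 / (2 * k * ρ ^ 2) ≤ 1 - k / (2 * N ^ 2) := by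
    have hN2 : (k : ℝ) ^ 2 * ρ ^ 2 ≤ N ^ 2 := by
      have := pow_le_pow_left₀ (by positivity : (0:ℝ) ≤ (k:ℝ)*ρ) hNge 2
      nlinarith [this]
    have : (k : ℝ) / (2 * N ^ 2) ≤ 1 / (2 * k * ρ ^ 2) := by
      rw [div_le_div_iff₀ (by positivity) (by positivity)]
      nlinarith
    linarith
  refine le_trans h1 ?_
  rcases le_or_gt (1 - (k : ℝ) / (2 * N ^ 2)) 0 with hc | hc
  · exact le_trans hc (by positivity)
  · rw [le_div_iff₀ hSnorm_pos]
    have hk2N : (k : ℝ) < 2 * N ^ 2 := by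
      rw [sub_pos, div_lt_one (by positivity)] at hc
      exact hc
    have hcn : 0 ≤ (1 - (k : ℝ) / (2 * N ^ 2)) * ‖S‖ := by positivity
    have hsq : ((1 - (k : ℝ) / (2 * N ^ 2)) * ‖S‖) ^ 2 ≤ N ^ 2 := by
      have h5 : ((1 - (k : ℝ) / (2 * N ^ 2))) ^ 2 * (N ^ 2 + k) ≤ N ^ 2 := by
        have hN2 : (0 : ℝ) < N ^ 2 := by positivity
        have expand : ((1 : ℝ) - k / (2 * N ^ 2)) ^ 2
            = (2 * N ^ 2 - k) ^ 2 / (4 * N ^ 4) := by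
          have hne : (1:ℝ) - k / (2 * N ^ 2) = (2 * N ^ 2 - k) / (2 * N ^ 2) := by
            field_simp
          rw [hne, div_pow]
          congr 1
          ring
        rw [expand, div_mul_eq_mul_div, div_le_iff₀ (by positivity)]
        nlinarith [sq_nonneg ((k:ℝ)), hkpos]
      calc ((1 - (k : ℝ) / (2 * N ^ 2)) * ‖S‖) ^ 2
          = (1 - (k : ℝ) / (2 * N ^ 2)) ^ 2 * ‖S‖ ^ 2 := by ring
        _ ≤ (1 - (k : ℝ) / (2 * N ^ 2)) ^ 2 * (N ^ 2 + k) := by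
            exact mul_le_mul_of_nonneg_left hnormsq (sq_nonneg _)
        _ ≤ N ^ 2 := h5
    nlinarith [hsq, hcn, hNpos]
end
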